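/- Rough cost estimate from random simplifications: let (X,ρ) be a metric space, let T = {τ₁,…,τₙ} be a set of n point sequences over X, each of complexity at most m, let p ∈ [1,∞), let 2 ≤ ℓ ≤ m, and let δ ∈ (0,1). Let S be a multiset of ⌈log₂(2/δ)⌉ point sequences sampled from T uniformly and independently at random with replacement, and for each τ ∈ S let τ' be a fixed (2,ℓ)-simplification of τ under dtw_p. Let c be a point sequence attaining min_{c' ∈ X^{≤ℓ}} cost_p^1(T,c'). Then with probability at least 1−δ/2, min_{τ ∈ S} cost_p^1(T, τ') ≤ 8 · m^{1/p} · ℓ^{1/p} · cost_p^1(T,c). -/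

import Mathlib

/-!
Composing a warping of `x` with `y` and one of `y` with `z` through the common middle sequence
gives a warping of `x` with `z` whose pairs `(i, k)` each come with some `j` such that `(i, j)` and
`(j, k)` are pairs of the given warpings; each pair of the first is then used at most `|z|` times
and each pair of the second at most `|x|` times. With Minkowski's inequality this gives the weak
triangle inequality `dtw(x, z) ≤ |z|^{1/p} dtw(x, y) + |x|^{1/p} dtw(y, z)`.

By Markov's inequality at least half of `T` lies within twice the average distance from `c`. For
such a `τ`, two applications of the weak triangle inequality and `dtw(τ, τ') ≤ 2 dtw(τ, c)` give
`cost(τ') ≤ (4 + 3 ℓ^{1/p}) m^{1/p} cost(c) ≤ 8 m^{1/p} ℓ^{1/p} cost(c)`. A sample of size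
`N = ⌈log₂(2/δ)⌉` misses this half with probability at most `2^{-N} ≤ δ/2`.
-/

open scoped BigOperators

/-- An `(m₁, m₂)`-warping (with 0-based indices): a sequence of index pairs starting at
`(0,0)`, ending at `(m₁-1, m₂-1)`, whose consecutive increments lie in
`{(0,1), (1,0), (1,1)}`. -/
def IsWarping (m₁ m₂ : ℕ) (W : List (ℕ × ℕ)) : Prop :=
  W ≠ [] ∧ W.head? = some (0, 0) ∧ W.getLast? = some (m₁ - 1, m₂ - 1) ∧
    ∀ k, k + 1 < W.length →
      W.getD (k + 1) (0, 0) = ((W.getD k (0, 0)).1, (W.getD k (0, 0)).2 + 1) ∨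
      W.getD (k + 1) (0, 0) = ((W.getD k (0, 0)).1 + 1, (W.getD k (0, 0)).2) ∨
      W.getD (k + 1) (0, 0) = ((W.getD k (0, 0)).1 + 1, (W.getD k (0, 0)).2 + 1)

/-- The cost `Σ_{(i,j) ∈ W} ρ(σ_i, τ_j)^p` of a warping `W`. -/
noncomputable def warpCost {X : Type*} [MetricSpace X] [Inhabited X]
    (p : ℝ) (σ τ : List X) (W : List (ℕ × ℕ)) : ℝ :=
  (W.map fun ij => dist (σ.getD ij.1 default) (τ.getD ij.2 default) ^ p).sum

/-- The `p`-dynamic time warping distance between two point sequences. -/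
noncomputable def dtw {X : Type*} [MetricSpace X] [Inhabited X] (p : ℝ) (σ τ : List X) : ℝ :=
  sInf { c : ℝ | ∃ W, IsWarping σ.length τ.length W ∧ c = warpCost p σ τ W ^ (1 / p) }

/-- `cost_p^q(T, c) = Σ_{τ ∈ T} dtw_p(c, τ)^q`. -/
noncomputable def dtwCost {X : Type*} [MetricSpace X] [Inhabited X]
    (p q : ℝ) (T : Finset (List X)) (c : List X) : ℝ :=
  ∑ τ ∈ T, dtw p c τ ^ q

/-- `σ` is a point sequence of complexity at most `ℓ`, i.e. `σ ∈ X^{≤ℓ}`. -/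
def SeqLE {X : Type*} (ℓ : ℕ) (σ : List X) : Prop := 2 ≤ σ.length ∧ σ.length ≤ ℓ

open Relation

def WarpStep (u v : ℕ × ℕ) : Prop :=
  v = (u.1, u.2 + 1) ∨ v = (u.1 + 1, u.2) ∨ v = (u.1 + 1, u.2 + 1)

theorem warpStep_iff {i j i' j' : ℕ} :
    WarpStep (i, j) (i', j') ↔
      i ≤ i' ∧ i' ≤ i + 1 ∧ j ≤ j' ∧ j' ≤ j + 1 ∧ i + j < i' + j' := by
  simp only [WarpStep, Prod.mk.injEq]
  omega

theorem WarpStep.lt {u v : ℕ × ℕ} (h : WarpStep u v) : u < v := by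
  obtain ⟨i, j⟩ := u
  obtain ⟨i', j'⟩ := v
  rw [warpStep_iff] at h
  rw [Prod.lt_iff]
  omega

theorem reflTransGen_warpStep_zero (a b : ℕ) : ReflTransGen WarpStep (0, 0) (a, b) := by
  induction b with
  | zero =>
    induction a with
    | zero => exact .refl
    | succ a ih => exact ih.tail (Or.inr (Or.inl rfl))
  | succ b ih => exact ih.tail (Or.inl rfl)

theorem isWarping_iff {m₁ m₂ : ℕ} {W : List (ℕ × ℕ)} :
    IsWarping m₁ m₂ W ↔
      W.head? = some (0, 0) ∧ W.getLast? = some (m₁ - 1, m₂ - 1) ∧ W.IsChain WarpStep := by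
  rw [IsWarping, List.isChain_iff_getElem]
  constructor
  · rintro ⟨-, hhead, hlast, hstep⟩
    refine ⟨hhead, hlast, fun k hk => ?_⟩
    simpa [WarpStep, List.getD_eq_getElem, hk, Nat.lt_of_succ_lt hk] using hstep k hk
  · rintro ⟨hhead, hlast, hstep⟩
    refine ⟨by rintro rfl; simp at hhead, hhead, hlast, fun k hk => ?_⟩
    simpa [WarpStep, List.getD_eq_getElem, hk, Nat.lt_of_succ_lt hk] using hstep k hk

theorem isWarping_of_isChain {m₁ m₂ : ℕ} {l : List (ℕ × ℕ)} (h : ((0, 0) :: l).IsChain WarpStep)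
    (hlast : ((0, 0) :: l).getLast (List.cons_ne_nil _ _) = (m₁ - 1, m₂ - 1)) :
    IsWarping m₁ m₂ ((0, 0) :: l) :=
  isWarping_iff.2 ⟨rfl, by rw [List.getLast?_eq_some_getLast (List.cons_ne_nil _ _), hlast], h⟩

theorem exists_isWarping (m₁ m₂ : ℕ) : ∃ W, IsWarping m₁ m₂ W := by
  obtain ⟨l, hchain, hlast⟩ :=
    List.exists_isChain_cons_of_relationReflTransGen (reflTransGen_warpStep_zero (m₁ - 1) (m₂ - 1))
  exact ⟨_, isWarping_of_isChain hchain hlast⟩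

theorem le_of_mem_of_isChain_warpStep {l : List (ℕ × ℕ)} (hl : l.IsChain WarpStep) {t : ℕ × ℕ}
    (hlast : l.getLast? = some t) {u : ℕ × ℕ} (hu : u ∈ l) : u ≤ t := by
  refine hl.backwards_induction (· ≤ t) l (fun _ _ hstep hle => hstep.lt.le.trans hle)
    (fun hne => ?_) u hu
  rw [List.getLast?_eq_some_getLast hne, Option.some.injEq] at hlast
  exact hlast.le

namespace IsWarping

variable {m₁ m₂ : ℕ} {W : List (ℕ × ℕ)}

theorem nodup (hW : IsWarping m₁ m₂ W) : W.Nodup :=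
  (List.isChain_iff_pairwise.1 ((isWarping_iff.1 hW).2.2.imp fun _ _ => WarpStep.lt)).nodup

theorem le_of_mem (hW : IsWarping m₁ m₂ W) {u : ℕ × ℕ} (hu : u ∈ W) : u ≤ (m₁ - 1, m₂ - 1) :=
  le_of_mem_of_isChain_warpStep (isWarping_iff.1 hW).2.2 (isWarping_iff.1 hW).2.1 hu

theorem fst_lt (hW : IsWarping m₁ m₂ W) (hm : 0 < m₁) {u : ℕ × ℕ} (hu : u ∈ W) : u.1 < m₁ := by
  have := (hW.le_of_mem hu).1
  simp only at this
  omega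

theorem snd_lt (hW : IsWarping m₁ m₂ W) (hm : 0 < m₂) {u : ℕ × ℕ} (hu : u ∈ W) : u.2 < m₂ := by
  have := (hW.le_of_mem hu).2
  simp only at this
  omega

theorem swap (hW : IsWarping m₁ m₂ W) :
    IsWarping m₂ m₁ (W.map Prod.swap) := by
  obtain ⟨hhead, hlast, hchain⟩ := isWarping_iff.1 hW
  refine isWarping_iff.2 ⟨by simp [hhead], by simp [hlast], (List.isChain_map _).2 (hchain.imp ?_)⟩
  rintro ⟨i, j⟩ ⟨i', j'⟩ h
  rw [warpStep_iff] at h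
  exact warpStep_iff.2 (by omega)

end IsWarping

def MemComp (W₁ W₂ : List (ℕ × ℕ)) (u : ℕ × ℕ) : Prop :=
  ∃ j, (u.1, j) ∈ W₁ ∧ (j, u.2) ∈ W₂

def CompStep (W₁ W₂ : List (ℕ × ℕ)) (u v : ℕ × ℕ) : Prop :=
  WarpStep u v ∧ MemComp W₁ W₂ v

theorem CompStep.reflTransGen_head {W₁ W₂ : List (ℕ × ℕ)} {i j i' j' : ℕ} {w : ℕ × ℕ}
    (hi : i ≤ i' ∧ i' ≤ i + 1) (hj : j ≤ j' ∧ j' ≤ j + 1) (hmem : MemComp W₁ W₂ (i', j'))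
    (h : ReflTransGen (CompStep W₁ W₂) (i', j') w) : ReflTransGen (CompStep W₁ W₂) (i, j) w := by
  by_cases heq : i = i' ∧ j = j'
  · obtain ⟨rfl, rfl⟩ := heq
    exact h
  · exact .head ⟨warpStep_iff.2 (by omega), hmem⟩ h

theorem snd_eq_of_isChain_warpStep {i j i' j' a : ℕ} {r : List (ℕ × ℕ)}
    (h : ((i, j) :: (i', j') :: r).IsChain WarpStep)
    (hlast : ((i, j) :: (i', j') :: r).getLast? = some (a, j)) : j' = j := by
  have hstep := warpStep_iff.1 (List.isChain_cons_cons.1 h).1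
  have hle := le_of_mem_of_isChain_warpStep h hlast (u := (i', j')) (by simp)
  rw [Prod.mk_le_mk] at hle
  omega

theorem fst_eq_of_isChain_warpStep {j k j' k' c : ℕ} {r : List (ℕ × ℕ)}
    (h : ((j, k) :: (j', k') :: r).IsChain WarpStep)
    (hlast : ((j, k) :: (j', k') :: r).getLast? = some (j, c)) : j' = j := by
  have hstep := warpStep_iff.1 (List.isChain_cons_cons.1 h).1
  have hle := le_of_mem_of_isChain_warpStep h hlast (u := (j', k')) (by simp)
  rw [Prod.mk_le_mk] at hle
  omega

theorem reflTransGen_compStep_of_singleton_left {V₁ V₂ : List (ℕ × ℕ)} {i j c : ℕ}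
    (hV₁ : (i, j) ∈ V₁) (r₂ : List (ℕ × ℕ)) :
    ∀ k : ℕ, (j, k) :: r₂ ⊆ V₂ → ((j, k) :: r₂).IsChain WarpStep →
      ((j, k) :: r₂).getLast? = some (j, c) → ReflTransGen (CompStep V₁ V₂) (i, k) (i, c) := by
  induction r₂ with
  | nil =>
    intro k _ _ hlast
    obtain rfl : k = c := by simpa using hlast
    exact .refl
  | cons f₂ r₂ ih =>
    obtain ⟨j', k'⟩ := f₂
    intro k hV₂ hc hlast
    obtain rfl := fst_eq_of_isChain_warpStep hc hlast
    have hstep := warpStep_iff.1 (List.isChain_cons_cons.1 hc).1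
    exact CompStep.reflTransGen_head (by omega) (by omega) ⟨j', hV₁, hV₂ (by simp)⟩
      (ih k' (List.subset_of_cons_subset hV₂) (List.isChain_cons_cons.1 hc).2
        (List.getLast?_cons_cons ▸ hlast))

theorem reflTransGen_compStep_of_singleton_right {V₁ V₂ : List (ℕ × ℕ)} {j k a : ℕ}
    (hV₂ : (j, k) ∈ V₂) (r₁ : List (ℕ × ℕ)) :
    ∀ i : ℕ, (i, j) :: r₁ ⊆ V₁ → ((i, j) :: r₁).IsChain WarpStep →
      ((i, j) :: r₁).getLast? = some (a, j) → ReflTransGen (CompStep V₁ V₂) (i, k) (a, k) := by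
  induction r₁ with
  | nil =>
    intro i _ _ hlast
    obtain rfl : i = a := by simpa using hlast
    exact .refl
  | cons f₁ r₁ ih =>
    obtain ⟨i', j'⟩ := f₁
    intro i hV₁ hc hlast
    obtain rfl := snd_eq_of_isChain_warpStep hc hlast
    have hstep := warpStep_iff.1 (List.isChain_cons_cons.1 hc).1
    exact CompStep.reflTransGen_head (by omega) (by omega) ⟨j', hV₁ (by simp), hV₂⟩
      (ih i' (List.subset_of_cons_subset hV₁) (List.isChain_cons_cons.1 hc).2
        (List.getLast?_cons_cons ▸ hlast))

/-- Two warpings sharing their middle sequence are walked simultaneously: at each step advance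
the first one if its middle index stays put, else the second one if its middle index stays put,
else both (then both middle indices grow by one). -/
theorem reflTransGen_compStep {V₁ V₂ : List (ℕ × ℕ)} {a b c : ℕ} (r₁ : List (ℕ × ℕ)) :
    ∀ (i j : ℕ) (r₂ : List (ℕ × ℕ)) (k : ℕ), (i, j) :: r₁ ⊆ V₁ → (j, k) :: r₂ ⊆ V₂ →
      ((i, j) :: r₁).IsChain WarpStep → ((j, k) :: r₂).IsChain WarpStep →
      ((i, j) :: r₁).getLast? = some (a, b) → ((j, k) :: r₂).getLast? = some (b, c) →
      ReflTransGen (CompStep V₁ V₂) (i, k) (a, c) := by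
  induction r₁ with
  | nil =>
    intro i j r₂ k hV₁ hV₂ _ hc₂ h₁ h₂
    obtain ⟨rfl, rfl⟩ : i = a ∧ j = b := by simpa using h₁
    exact reflTransGen_compStep_of_singleton_left (hV₁ (by simp)) r₂ k hV₂ hc₂ h₂
  | cons f₁ r₁ ih₁ =>
    obtain ⟨i', j'⟩ := f₁
    intro i j r₂
    induction r₂ with
    | nil =>
      intro k hV₁ hV₂ hc₁ _ h₁ h₂
      obtain ⟨rfl, rfl⟩ : j = b ∧ k = c := by simpa using h₂
      exact reflTransGen_compStep_of_singleton_right (hV₂ (by simp)) _ i hV₁ hc₁ h₁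
    | cons f₂ r₂ ih₂ =>
      obtain ⟨j'', k'⟩ := f₂
      intro k hV₁ hV₂ hc₁ hc₂ h₁ h₂
      have hstep₁ := warpStep_iff.1 (List.isChain_cons_cons.1 hc₁).1
      have hstep₂ := warpStep_iff.1 (List.isChain_cons_cons.1 hc₂).1
      have hV₁' := List.subset_of_cons_subset hV₁
      have hV₂' := List.subset_of_cons_subset hV₂
      have hc₁' := (List.isChain_cons_cons.1 hc₁).2
      have hc₂' := (List.isChain_cons_cons.1 hc₂).2
      have h₁' := List.getLast?_cons_cons ▸ h₁
      have h₂' := List.getLast?_cons_cons ▸ h₂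
      by_cases hA : j' = j
      · subst hA
        exact CompStep.reflTransGen_head (by omega) (by omega)
          ⟨j', hV₁' (by simp), hV₂ (by simp)⟩ (ih₁ i' j' _ k hV₁' hV₂ hc₁' hc₂ h₁' h₂)
      by_cases hB : j'' = j
      · subst hB
        exact CompStep.reflTransGen_head (by omega) (by omega)
          ⟨j'', hV₁ (by simp), hV₂' (by simp)⟩ (ih₂ k' hV₁ hV₂' hc₁ hc₂' h₁ h₂')
      obtain rfl : j'' = j' := by omega
      exact CompStep.reflTransGen_head (by omega) (by omega)
        ⟨j'', hV₁' (by simp), hV₂' (by simp)⟩ (ih₁ i' j'' r₂ k' hV₁' hV₂' hc₁' hc₂' h₁' h₂')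

theorem IsWarping.exists_comp {m₁ m₂ m₃ : ℕ} {W₁ W₂ : List (ℕ × ℕ)} (h₁ : IsWarping m₁ m₂ W₁)
    (h₂ : IsWarping m₂ m₃ W₂) : ∃ W, IsWarping m₁ m₃ W ∧ ∀ u ∈ W, MemComp W₁ W₂ u := by
  obtain ⟨hh₁, hl₁, hc₁⟩ := isWarping_iff.1 h₁
  obtain ⟨hh₂, hl₂, hc₂⟩ := isWarping_iff.1 h₂
  obtain ⟨r₁, rfl⟩ := List.head?_eq_some_iff.1 hh₁
  obtain ⟨r₂, rfl⟩ := List.head?_eq_some_iff.1 hh₂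
  obtain ⟨l, hchain, hlast⟩ := List.exists_isChain_cons_of_relationReflTransGen
    (reflTransGen_compStep r₁ 0 0 r₂ 0 (List.Subset.refl _) (List.Subset.refl _) hc₁ hc₂ hl₁ hl₂)
  have h₀ : MemComp ((0, 0) :: r₁) ((0, 0) :: r₂) (0, 0) := ⟨0, by simp, by simp⟩
  refine ⟨_, isWarping_of_isChain (hchain.imp fun _ _ => And.left) hlast, ?_⟩
  exact List.forall_mem_cons.2 ⟨h₀, hchain.cons_induction _ _ (fun _ _ h _ => h.2) h₀⟩

theorem Finset.sum_comp_le_nsmul_sum {ι κ M : Type*} [DecidableEq κ] [AddCommMonoid M]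
    [PartialOrder M] [IsOrderedAddMonoid M] {s : Finset ι} {t : Finset κ} {n : ℕ} {φ : ι → κ}
    {k : ι → ℕ} (hφ : ∀ i ∈ s, φ i ∈ t) (hk : ∀ i ∈ s, k i < n)
    (hinj : Set.InjOn (fun i => (φ i, k i)) s) {f : κ → M} (hf : ∀ j ∈ t, 0 ≤ f j) :
    ∑ i ∈ s, f (φ i) ≤ n • ∑ j ∈ t, f j :=
  calc ∑ i ∈ s, f (φ i) = ∑ x ∈ s.image fun i => (φ i, k i), f x.1 :=
        (sum_image (f := fun x => f x.1) hinj).symm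
    _ ≤ ∑ x ∈ t ×ˢ range n, f x.1 := by
      refine sum_le_sum_of_subset_of_nonneg ?_ fun x hx _ => hf _ (mem_product.1 hx).1
      simp only [image_subset_iff, mem_product, mem_range]
      exact fun i hi => ⟨hφ i hi, hk i hi⟩
    _ = n • ∑ j ∈ t, f j := by simp [sum_product, sum_const, smul_sum]

theorem SeqLE.ne_nil {X : Type*} {ℓ : ℕ} {σ : List X} (h : SeqLE ℓ σ) : σ ≠ [] :=
  List.ne_nil_of_length_pos (by have := h.1; omega)

section DTW

variable {X : Type*} [MetricSpace X] [Inhabited X] {p : ℝ}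

theorem warpCost_nonneg (σ τ : List X) (W : List (ℕ × ℕ)) : 0 ≤ warpCost p σ τ W :=
  List.sum_nonneg fun _ h => by
    obtain ⟨_, _, rfl⟩ := List.mem_map.1 h
    exact Real.rpow_nonneg dist_nonneg p

theorem warpCost_eq_sum_toFinset (σ τ : List X) {W : List (ℕ × ℕ)} (hW : W.Nodup) :
    warpCost p σ τ W = ∑ u ∈ W.toFinset, dist (σ.getD u.1 default) (τ.getD u.2 default) ^ p :=
  (List.sum_toFinset _ hW).symm

theorem dtw_nonneg (σ τ : List X) : 0 ≤ dtw p σ τ :=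
  Real.sInf_nonneg fun _ ⟨W, _, h⟩ => h ▸ Real.rpow_nonneg (warpCost_nonneg σ τ W) _

theorem dtw_le_warpCost {σ τ : List X} {W : List (ℕ × ℕ)} (hW : IsWarping σ.length τ.length W) :
    dtw p σ τ ≤ warpCost p σ τ W ^ (1 / p) :=
  csInf_le ⟨0, fun _ ⟨W, _, h⟩ => h ▸ Real.rpow_nonneg (warpCost_nonneg σ τ W) _⟩ ⟨W, hW, rfl⟩

theorem le_dtw {σ τ : List X} {a : ℝ}
    (h : ∀ W, IsWarping σ.length τ.length W → a ≤ warpCost p σ τ W ^ (1 / p)) : a ≤ dtw p σ τ := by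
  obtain ⟨W, hW⟩ := exists_isWarping σ.length τ.length
  exact le_csInf ⟨_, W, hW, rfl⟩ fun _ ⟨W, hW, hc⟩ => hc ▸ h W hW

theorem warpCost_map_swap (σ τ : List X) (W : List (ℕ × ℕ)) :
    warpCost p τ σ (W.map Prod.swap) = warpCost p σ τ W := by
  simp [warpCost, Function.comp_def, dist_comm]

theorem dtw_comm (σ τ : List X) : dtw p σ τ = dtw p τ σ := by
  have key : ∀ σ τ : List X, dtw p τ σ ≤ dtw p σ τ := fun σ τ =>
    le_dtw fun W hW => (warpCost_map_swap σ τ W) ▸ dtw_le_warpCost hW.swap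
  exact le_antisymm (key τ σ) (key σ τ)

theorem dtw_le_warpCost_add_warpCost (hp : 1 ≤ p) {x y z : List X} (hx : x ≠ []) (hz : z ≠ [])
    {W₁ W₂ : List (ℕ × ℕ)} (h₁ : IsWarping x.length y.length W₁)
    (h₂ : IsWarping y.length z.length W₂) :
    dtw p x z ≤ (z.length : ℝ) ^ (1 / p) * warpCost p x y W₁ ^ (1 / p) +
      (x.length : ℝ) ^ (1 / p) * warpCost p y z W₂ ^ (1 / p) := by
  classical
  obtain ⟨W, hW, hcomp⟩ := h₁.exists_comp h₂
  choose! J hJ₁ hJ₂ using hcomp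
  set F := fun u : ℕ × ℕ => dist (x.getD u.1 default) (y.getD (J u) default)
  set G := fun u : ℕ × ℕ => dist (y.getD (J u) default) (z.getD u.2 default)
  have hF : ∑ u ∈ W.toFinset, F u ^ p ≤ z.length * warpCost p x y W₁ := by
    rw [warpCost_eq_sum_toFinset x y h₁.nodup, ← nsmul_eq_mul]
    refine Finset.sum_comp_le_nsmul_sum (φ := fun u => (u.1, J u)) (k := Prod.snd)
      (f := fun e => dist (x.getD e.1 default) (y.getD e.2 default) ^ p)
      (fun u hu => List.mem_toFinset.2 (hJ₁ u (List.mem_toFinset.1 hu)))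
      (fun u hu => hW.snd_lt (List.length_pos_of_ne_nil hz) (List.mem_toFinset.1 hu))
      (fun u _ v _ huv => ?_) (fun _ _ => Real.rpow_nonneg dist_nonneg p)
    simp only [Prod.mk.injEq] at huv
    exact Prod.ext huv.1.1 huv.2
  have hG : ∑ u ∈ W.toFinset, G u ^ p ≤ x.length * warpCost p y z W₂ := by
    rw [warpCost_eq_sum_toFinset y z h₂.nodup, ← nsmul_eq_mul]
    refine Finset.sum_comp_le_nsmul_sum (φ := fun u => (J u, u.2)) (k := Prod.fst)
      (f := fun e => dist (y.getD e.1 default) (z.getD e.2 default) ^ p)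
      (fun u hu => List.mem_toFinset.2 (hJ₂ u (List.mem_toFinset.1 hu)))
      (fun u hu => hW.fst_lt (List.length_pos_of_ne_nil hx) (List.mem_toFinset.1 hu))
      (fun u _ v _ huv => ?_) (fun _ _ => Real.rpow_nonneg dist_nonneg p)
    simp only [Prod.mk.injEq] at huv
    exact Prod.ext huv.2 huv.1.2
  calc dtw p x z ≤ warpCost p x z W ^ (1 / p) := dtw_le_warpCost hW
    _ ≤ (∑ u ∈ W.toFinset, (F u + G u) ^ p) ^ (1 / p) := by
      rw [warpCost_eq_sum_toFinset x z hW.nodup]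
      gcongr with u
      exact dist_triangle _ _ _
    _ ≤ (∑ u ∈ W.toFinset, F u ^ p) ^ (1 / p) + (∑ u ∈ W.toFinset, G u ^ p) ^ (1 / p) :=
      Real.Lp_add_le_of_nonneg _ hp (fun _ _ => dist_nonneg) (fun _ _ => dist_nonneg)
    _ ≤ (z.length * warpCost p x y W₁) ^ (1 / p) + (x.length * warpCost p y z W₂) ^ (1 / p) := by
      gcongr
    _ = _ := by
      rw [Real.mul_rpow (Nat.cast_nonneg _) (warpCost_nonneg x y W₁),
        Real.mul_rpow (Nat.cast_nonneg _) (warpCost_nonneg y z W₂)]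

theorem dtw_le_rpow_mul_dtw_add (hp : 1 ≤ p) {x z : List X} (y : List X) (hx : x ≠ [])
    (hz : z ≠ []) :
    dtw p x z ≤ (z.length : ℝ) ^ (1 / p) * dtw p x y + (x.length : ℝ) ^ (1 / p) * dtw p y z := by
  have hA : 0 < (z.length : ℝ) ^ (1 / p) :=
    Real.rpow_pos_of_pos (Nat.cast_pos.2 (List.length_pos_of_ne_nil hz)) _
  have hB : 0 < (x.length : ℝ) ^ (1 / p) :=
    Real.rpow_pos_of_pos (Nat.cast_pos.2 (List.length_pos_of_ne_nil hx)) _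
  have h₁ : (dtw p x z - (x.length : ℝ) ^ (1 / p) * dtw p y z) / (z.length : ℝ) ^ (1 / p) ≤
      dtw p x y := by
    refine le_dtw fun W₁ h₁ => (div_le_iff₀ hA).2 ?_
    have h₂ : (dtw p x z - (z.length : ℝ) ^ (1 / p) * warpCost p x y W₁ ^ (1 / p)) /
        (x.length : ℝ) ^ (1 / p) ≤ dtw p y z :=
      le_dtw fun W₂ h₂ => (div_le_iff₀ hB).2 (by
        linarith [dtw_le_warpCost_add_warpCost hp hx hz h₁ h₂])
    rw [div_le_iff₀ hB] at h₂
    linarith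
  rw [div_le_iff₀ hA] at h₁
  linarith

theorem dtwCost_one (T : Finset (List X)) (c : List X) :
    dtwCost p 1 T c = ∑ τ ∈ T, dtw p c τ := by
  simp [dtwCost]

theorem dtw_le_of_dtw_le_two_mul (hp : 1 ≤ p) {m ℓ : ℕ} {c τ s σ : List X} (hτ : SeqLE m τ)
    (hσ : SeqLE m σ) (hs : SeqLE ℓ s) (hsτ : dtw p τ s ≤ 2 * dtw p τ c) :
    dtw p s σ ≤ (2 + (ℓ : ℝ) ^ (1 / p)) * (m : ℝ) ^ (1 / p) * dtw p c τ +
      (ℓ : ℝ) ^ (1 / p) * (m : ℝ) ^ (1 / p) * dtw p c σ := by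
  have hsτ' : dtw p s τ ≤ 2 * dtw p c τ := by rwa [dtw_comm s, dtw_comm c]
  have hτσ : dtw p τ σ ≤ (m : ℝ) ^ (1 / p) * dtw p c τ + (m : ℝ) ^ (1 / p) * dtw p c σ :=
    calc dtw p τ σ
        ≤ (σ.length : ℝ) ^ (1 / p) * dtw p τ c + (τ.length : ℝ) ^ (1 / p) * dtw p c σ :=
          dtw_le_rpow_mul_dtw_add hp c hτ.ne_nil hσ.ne_nil
      _ ≤ (m : ℝ) ^ (1 / p) * dtw p c τ + (m : ℝ) ^ (1 / p) * dtw p c σ := by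
        rw [dtw_comm τ c]
        gcongr
        · exact dtw_nonneg _ _
        · exact hσ.2
        · exact dtw_nonneg _ _
        · exact hτ.2
  calc dtw p s σ
      ≤ (σ.length : ℝ) ^ (1 / p) * dtw p s τ + (s.length : ℝ) ^ (1 / p) * dtw p τ σ :=
        dtw_le_rpow_mul_dtw_add hp τ hs.ne_nil hσ.ne_nil
    _ ≤ (m : ℝ) ^ (1 / p) * (2 * dtw p c τ) +
        (ℓ : ℝ) ^ (1 / p) * ((m : ℝ) ^ (1 / p) * dtw p c τ + (m : ℝ) ^ (1 / p) * dtw p c σ) := by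
      gcongr
      · exact dtw_nonneg _ _
      · exact hσ.2
      · exact dtw_nonneg _ _
      · exact hs.2
    _ = _ := by ring

theorem dtwCost_le_of_dtw_le_two_mul (hp : 1 ≤ p) {T : Finset (List X)} {m ℓ : ℕ}
    (hT : ∀ σ ∈ T, SeqLE m σ) {c τ s : List X} (hc : SeqLE ℓ c) (hτ : τ ∈ T) (hs : SeqLE ℓ s)
    (hsτ : dtw p τ s ≤ 2 * dtw p τ c) (hτc : T.card * dtw p c τ ≤ 2 * dtwCost p 1 T c) :
    dtwCost p 1 T s ≤ 8 * (m : ℝ) ^ (1 / p) * (ℓ : ℝ) ^ (1 / p) * dtwCost p 1 T c := by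
  rw [dtwCost_one] at hτc ⊢
  rw [dtwCost_one]
  set M := (m : ℝ) ^ (1 / p)
  set L := (ℓ : ℝ) ^ (1 / p)
  set C := ∑ σ ∈ T, dtw p c σ
  have hM : 0 ≤ M := Real.rpow_nonneg (Nat.cast_nonneg _) _
  have hL : 1 ≤ L :=
    Real.one_le_rpow (by exact_mod_cast (by have := hc.1; have := hc.2; omega : 1 ≤ ℓ))
      (one_div_nonneg.2 (by linarith))
  have hC : 0 ≤ C := Finset.sum_nonneg fun σ _ => dtw_nonneg c σ
  calc ∑ σ ∈ T, dtw p s σ ≤ ∑ σ ∈ T, ((2 + L) * M * dtw p c τ + L * M * dtw p c σ) :=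
        Finset.sum_le_sum fun σ hσ => dtw_le_of_dtw_le_two_mul hp (hT τ hτ) (hT σ hσ) hs hsτ
    _ = (2 + L) * M * (T.card * dtw p c τ) + L * M * C := by
        rw [Finset.sum_add_distrib, Finset.sum_const, nsmul_eq_mul, ← Finset.mul_sum]
        ring
    _ ≤ (2 + L) * M * (2 * C) + L * M * C := by gcongr
    _ ≤ 8 * M * L * C := by nlinarith [mul_nonneg (mul_nonneg hM hC) (sub_nonneg.2 hL)]

end DTW

section Sampling

open Finset

theorem Fintype.two_mul_card_filter_lt_le {ι : Type*} [Fintype ι] (f : ι → ℝ)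
    (hf : ∀ i, 0 ≤ f i) : 2 * #{i | 2 * ∑ j, f j < Fintype.card ι * f i} ≤ Fintype.card ι := by
  classical
  set B := ({i | 2 * ∑ j, f j < Fintype.card ι * f i} : Finset ι)
  rcases B.eq_empty_or_nonempty with hB | hB
  · simp [hB]
  have hlt : ∑ _i ∈ B, 2 * ∑ j, f j < ∑ i ∈ B, Fintype.card ι * f i :=
    sum_lt_sum_of_nonempty hB fun i hi => (mem_filter.1 hi).2
  have hle : ∑ i ∈ B, Fintype.card ι * f i ≤ Fintype.card ι * ∑ j, f j := by
    rw [← mul_sum]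
    exact mul_le_mul_of_nonneg_left
      (sum_le_sum_of_subset_of_nonneg (subset_univ _) fun i _ _ => hf i) (Nat.cast_nonneg _)
  rw [sum_const, nsmul_eq_mul] at hlt
  have hS : 0 < ∑ j, f j := by
    refine (Finset.sum_nonneg fun j _ => hf j).lt_of_ne fun h => ?_
    rw [← h] at hlt hle
    linarith
  have : (2 * B.card : ℝ) < Fintype.card ι := by nlinarith
  exact_mod_cast this.le

theorem card_exists_add_card_pow {α : Type*} [Fintype α] (P : α → Prop) [DecidablePred P]
    (N : ℕ) : Nat.card {s : Fin N → α | ∃ i, P (s i)} + #{a | ¬P a} ^ N = Fintype.card α ^ N := by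
  classical
  have hbad : #{s : Fin N → α | ¬∃ i, P (s i)} = #{a | ¬P a} ^ N := by
    have : ({s : Fin N → α | ¬∃ i, P (s i)} : Finset _) =
        Fintype.piFinset fun _ => ({a | ¬P a} : Finset α) := by
      ext s
      simp [Fintype.mem_piFinset]
    rw [this, Fintype.card_piFinset, prod_const, card_univ, Fintype.card_fin]
  have hsplit := card_filter_add_card_filter_not (s := univ) fun s : Fin N → α => ∃ i, P (s i)
  rw [card_univ, Fintype.card_fun, Fintype.card_fin] at hsplit
  rw [← hbad, ← hsplit, Nat.card_eq_fintype_card, Fintype.card_subtype]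
  rfl

theorem one_sub_mul_card_le_card_exists {α : Type*} [Fintype α] (P : α → Prop)
    [DecidablePred P] (hP : 2 * #{a | ¬P a} ≤ Fintype.card α) {δ : ℝ} (hδ : 0 < δ) {N : ℕ}
    (hN : 2 / δ ≤ 2 ^ N) :
    (1 - δ / 2) * Fintype.card (Fin N → α) ≤ Nat.card {s : Fin N → α | ∃ i, P (s i)} := by
  have hsum : (Nat.card {s : Fin N → α | ∃ i, P (s i)} : ℝ) + (#{a | ¬P a} : ℝ) ^ N =
      (Fintype.card α : ℝ) ^ N := by
    exact_mod_cast card_exists_add_card_pow P N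
  have hbad : (#{a | ¬P a} : ℝ) ≤ Fintype.card α / 2 := by
    have : (2 * #{a | ¬P a} : ℝ) ≤ Fintype.card α := by exact_mod_cast hP
    linarith
  rw [div_le_iff₀ hδ] at hN
  have hpow : (#{a | ¬P a} : ℝ) ^ N ≤ δ / 2 * (Fintype.card α : ℝ) ^ N :=
    calc (#{a | ¬P a} : ℝ) ^ N ≤ (Fintype.card α / 2 : ℝ) ^ N := by gcongr
      _ = (Fintype.card α : ℝ) ^ N / 2 ^ N := div_pow _ _ _
      _ ≤ δ / 2 * (Fintype.card α : ℝ) ^ N := by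
        rw [div_le_iff₀ (by positivity)]
        nlinarith [pow_nonneg (Nat.cast_nonneg (α := ℝ) (Fintype.card α)) N]
  rw [Fintype.card_fun, Fintype.card_fin, Nat.cast_pow]
  linarith

end Sampling

theorem Real.le_pow_ceil_logb {b x : ℝ} (hb : 1 < b) (hx : 0 < x) : x ≤ b ^ ⌈Real.logb b x⌉₊ :=
  calc x = b ^ Real.logb b x := (Real.rpow_logb (by linarith) hb.ne' hx).symm
    _ ≤ b ^ (⌈Real.logb b x⌉₊ : ℝ) := Real.rpow_le_rpow_of_exponent_le hb.le (Nat.le_ceil _)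
    _ = b ^ ⌈Real.logb b x⌉₊ := Real.rpow_natCast _ _

/-- Sampling with replacement is modelled by the uniform distribution on
`Fin ⌈log₂(2/δ)⌉ → T`, so probabilities are proportions of such tuples. -/
theorem rough_estimate_from_random_simplifications_general {X : Type*} [MetricSpace X] [Inhabited X]
    (T : Finset (List X)) (m ℓ : ℕ)
    (hm : ∀ τ ∈ T, 2 ≤ τ.length ∧ τ.length ≤ m)
    (p : ℝ) (hp : 1 ≤ p) (δ : ℝ) (hδ0 : 0 < δ)
    (simp : List X → List X)
    (hsimp : ∀ τ ∈ T, SeqLE ℓ (simp τ) ∧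
      ∀ π' : List X, SeqLE ℓ π' → dtw p τ (simp τ) ≤ 2 * dtw p τ π')
    (c : List X) (hc : SeqLE ℓ c) :
    (1 - δ / 2) *
        (Fintype.card (Fin ⌈Real.logb 2 (2 / δ)⌉₊ → {τ // τ ∈ T}) : ℝ) ≤
      (Nat.card {s : Fin ⌈Real.logb 2 (2 / δ)⌉₊ → {τ // τ ∈ T} |
          ∃ i, dtwCost p 1 T (simp ((s i : List X))) ≤
            8 * (m : ℝ) ^ (1 / p) * (ℓ : ℝ) ^ (1 / p) * dtwCost p 1 T c} : ℝ) := by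
  classical
  set f : {τ // τ ∈ T} → ℝ := fun τ => dtw p c τ
  -- `τ` is good when it is within twice the average distance from `c`
  set good := fun τ => ¬2 * ∑ σ, f σ < Fintype.card {τ // τ ∈ T} * f τ
  have hhalf : 2 * (Finset.univ.filter fun τ => ¬good τ).card ≤ Fintype.card {τ // τ ∈ T} := by
    simpa [good] using Fintype.two_mul_card_filter_lt_le f fun _ => dtw_nonneg _ _
  refine (one_sub_mul_card_le_card_exists good hhalf hδ0
    (Real.le_pow_ceil_logb one_lt_two (by positivity))).trans ?_
  refine Nat.cast_le.2 (Nat.card_mono (Set.toFinite _) fun s ⟨i, hi⟩ => ⟨i, ?_⟩)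
  obtain ⟨hsimpℓ, hsimp_le⟩ := hsimp _ (s i).2
  refine dtwCost_le_of_dtw_le_two_mul hp hm hc (s i).2 hsimpℓ (hsimp_le c hc) ?_
  rw [dtwCost_one, ← Finset.sum_coe_sort T, ← Fintype.card_coe T]
  exact not_lt.1 hi

/-- **Rough cost estimate from random simplifications** (Lemma `lemma:roughapprox`):
sampling `⌈log₂(2/δ)⌉` sequences from `T` uniformly and independently with replacement
(modelled by the uniform space of functions `Fin ⌈log₂(2/δ)⌉ → T`), with probability at
least `1 - δ/2` some sampled sequence `τ` has
`cost_p^1(T, τ') ≤ 8 m^{1/p} ℓ^{1/p} cost_p^1(T, c)` where `τ'` is its fixed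
`(2,ℓ)`-simplification and `c` is an optimal restricted `(p,1)`-mean. -/
theorem rough_estimate_from_random_simplifications {X : Type*} [MetricSpace X] [Inhabited X]
    (T : Finset (List X)) (hT : T.Nonempty) (n m ℓ : ℕ) (hn : T.card = n)
    (hm : ∀ τ ∈ T, 2 ≤ τ.length ∧ τ.length ≤ m)
    (hℓ2 : 2 ≤ ℓ) (hℓm : ℓ ≤ m)
    (p : ℝ) (hp : 1 ≤ p) (δ : ℝ) (hδ0 : 0 < δ) (hδ1 : δ < 1)
    (simp : List X → List X)
    (hsimp : ∀ τ ∈ T, SeqLE ℓ (simp τ) ∧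
      ∀ π' : List X, SeqLE ℓ π' → dtw p τ (simp τ) ≤ 2 * dtw p τ π')
    (c : List X) (hc : SeqLE ℓ c)
    (hcopt : ∀ c' : List X, SeqLE ℓ c' → dtwCost p 1 T c ≤ dtwCost p 1 T c') :
    (1 - δ / 2) *
        (Fintype.card (Fin ⌈Real.logb 2 (2 / δ)⌉₊ → {τ // τ ∈ T}) : ℝ) ≤
      (Nat.card {s : Fin ⌈Real.logb 2 (2 / δ)⌉₊ → {τ // τ ∈ T} |
          ∃ i, dtwCost p 1 T (simp ((s i : List X))) ≤
            8 * (m : ℝ) ^ (1 / p) * (ℓ : ℝ) ^ (1 / p) * dtwCost p 1 T c} : ℝ) :=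
  rough_estimate_from_random_simplifications_general T m ℓ hm p hp δ hδ0 simp hsimp c hc
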